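/- For every nonnegative integer n, Σ_{m=0}^n C(n+1,m) (−1)^{n−m} S_m^{(r,k)}(a_1,…,a_r) = Σ_{l=0}^n Σ_{m=0}^l (−1)^{l−m} C(l,m) C(n+1,l+1) B_m^{(k−1)} B_{n−l}(a_1,…,a_r), where B_m^{(k−1)} = B_m^{(k−1)}(0) are the poly-Bernoulli numbers of index k−1. -/

import Mathlib

/-!
Put `D = 1 - e^{-t}`. Evaluating the three generating-function identities at `x = 0` and
cancelling the Barnes factor `∏ (e^{a_j t} - 1)` gives `D · ∑ S_m t^m/m! = Li_k(D) · ∑ B_m t^m/m!`.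
Since `D' = e^{-t}`, termwise differentiation of `Li_k(D) = ∑ D^m / m^k` gives
`D · (Li_k(D))' = e^{-t} Li_{k-1}(D) = e^{-t} D · ∑ B_m^{(k-1)} t^m/m!`, so
`(Li_k(D))' = e^{-t} ∑ B_m^{(k-1)} t^m/m!`. Comparing the coefficients of `t^{n+1}/(n+1)!`
on both sides of the first identity, each a binomial convolution, gives the theorem.
-/

open PowerSeries Finset

/-- The formal power series `e^{c·t}` over a commutative `ℚ`-algebra `R`. -/
noncomputable def expS {R : Type*} [CommRing R] [Algebra ℚ R] (c : R) : PowerSeries R :=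
  PowerSeries.rescale c (PowerSeries.exp R)

/-- The formal power series `Li_k(1 - e^{-t})` over `ℂ`, where
`Li_k(z) = ∑_{m ≥ 1} z^m / m^k` is the `k`-th polylogarithm.  Since `1 - e^{-t}`
has order `1`, the coefficient of `t^n` only involves the terms with `1 ≤ m ≤ n`. -/
noncomputable def Lik (k : ℤ) : PowerSeries ℂ :=
  PowerSeries.mk fun n => ∑ m ∈ Finset.Icc 1 n,
    ((m : ℂ) ^ k)⁻¹ * PowerSeries.coeff n ((1 - expS (-1 : ℂ)) ^ m)

/-- The exponential generating function `∑_n p n · t^n / n!` of a sequence of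
complex polynomials. -/
noncomputable def egf (p : ℕ → Polynomial ℂ) : PowerSeries (Polynomial ℂ) :=
  PowerSeries.mk fun n => ((n.factorial : ℂ))⁻¹ • p n

open scoped Nat

section ExponentialGeneratingFunction

variable {K : Type*} [Field K]

noncomputable def egfOf (a : ℕ → K) : K⟦X⟧ := mk fun n => (n ! : K)⁻¹ * a n

@[simp]
lemma coeff_egfOf (a : ℕ → K) (n : ℕ) : coeff n (egfOf a) = (n ! : K)⁻¹ * a n :=
  coeff_mk _ _

lemma factorial_mul_coeff_derivative (f : K⟦X⟧) (n : ℕ) :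
    (n ! : K) * coeff n (d⁄dX K f) = ((n + 1)! : K) * coeff (n + 1) f := by
  rw [coeff_derivative, Nat.factorial_succ]
  push_cast
  ring

lemma constantCoeff_egfOf (a : ℕ → K) : constantCoeff (egfOf a) = a 0 := by
  rw [← coeff_zero_eq_constantCoeff_apply, coeff_egfOf, Nat.factorial_zero, Nat.cast_one,
    inv_one, one_mul]

variable [CharZero K]

lemma factorial_mul_coeff_egfOf (a : ℕ → K) (n : ℕ) : (n ! : K) * coeff n (egfOf a) = a n := by
  rw [coeff_egfOf, mul_inv_cancel_left₀ (by exact_mod_cast n.factorial_ne_zero)]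

lemma egfOf_factorial_mul_coeff (f : K⟦X⟧) : egfOf (fun n => (n ! : K) * coeff n f) = f := by
  ext n
  rw [coeff_egfOf, inv_mul_cancel_left₀ (by exact_mod_cast n.factorial_ne_zero)]

lemma egfOf_mul (a b : ℕ → K) :
    egfOf a * egfOf b = egfOf fun n => ∑ i ∈ range (n + 1), (n.choose i : K) * a i * b (n - i) := by
  ext n
  rw [coeff_mul, Nat.sum_antidiagonal_eq_sum_range_succ_mk, coeff_egfOf, mul_sum]
  refine sum_congr rfl fun i hi => ?_
  have hi : i ≤ n := Nat.lt_succ_iff.1 (mem_range.1 hi)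
  simp only [coeff_egfOf]
  rw [Nat.cast_choose K hi]
  have := n.factorial_ne_zero
  have := i.factorial_ne_zero
  have := (n - i).factorial_ne_zero
  field_simp

lemma derivative_egfOf (a : ℕ → K) : d⁄dX K (egfOf a) = egfOf fun n => a (n + 1) := by
  ext n
  have := n.factorial_ne_zero
  rw [coeff_derivative, coeff_egfOf, coeff_egfOf, Nat.factorial_succ]
  push_cast
  field_simp

variable [Algebra ℚ K]

lemma expS_eq_egfOf (c : K) : expS c = egfOf (c ^ ·) := by
  ext n
  rw [expS, coeff_rescale, coeff_exp, coeff_egfOf, eq_ratCast]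
  push_cast
  ring

lemma derivative_expS (c : K) : d⁄dX K (expS c) = c • expS c := by
  ext n
  simp only [expS_eq_egfOf, derivative_egfOf, pow_succ, coeff_egfOf, map_smul, smul_eq_mul]
  ring

lemma constantCoeff_one_sub_expS (c : K) : constantCoeff (1 - expS c) = 0 := by
  simp [expS_eq_egfOf, constantCoeff_egfOf]

lemma one_sub_expS_ne_zero {c : K} (hc : c ≠ 0) : 1 - expS c ≠ 0 := by
  intro h
  have h1 := congrArg (coeff 1) h
  simp [expS_eq_egfOf, hc] at h1

lemma coeff_one_sub_expS_pow_of_lt (c : K) {n m : ℕ} (h : n < m) :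
    coeff n ((1 - expS c) ^ m) = 0 :=
  X_pow_dvd_iff.1 (pow_dvd_pow_of_dvd (X_dvd_iff.2 (constantCoeff_one_sub_expS c)) m) n h

lemma factorial_mul_coeff_succ_one_sub_expS_neg_one_mul (s : ℕ → K) (n : ℕ) :
    ((n + 1)! : K) * coeff (n + 1) ((1 - expS (-1 : K)) * egfOf s)
      = ∑ m ∈ range (n + 1), ((n + 1).choose m : K) * (-1) ^ (n - m) * s m := by
  rw [sub_mul, one_mul, expS_eq_egfOf, mul_comm (egfOf _) (egfOf s), egfOf_mul, map_sub, mul_sub,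
    factorial_mul_coeff_egfOf, factorial_mul_coeff_egfOf, sum_range_succ _ (n + 1),
    Nat.choose_self, Nat.sub_self, pow_zero, Nat.cast_one, one_mul, mul_one, sub_add_cancel_right,
    ← sum_neg_distrib]
  refine sum_congr rfl fun m hm => ?_
  rw [Nat.sub_add_comm (Nat.lt_succ_iff.1 (mem_range.1 hm)), pow_succ]
  ring

end ExponentialGeneratingFunction

lemma map_expS {R S : Type*} [CommRing R] [Algebra ℚ R] [CommRing S] [Algebra ℚ S]
    (f : R →+* S) (c : R) : map f (expS c) = expS (f c) := by
  rw [expS, expS, ← rescale_map, map_exp]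

lemma expS_zero {R : Type*} [CommRing R] [Algebra ℚ R] : expS (0 : R) = 1 := by
  rw [expS, rescale_zero, RingHom.comp_apply, constantCoeff_exp, map_one]

lemma map_evalRingHom_egf (p : ℕ → Polynomial ℂ) (x : ℂ) :
    map (Polynomial.evalRingHom x) (egf p) = egfOf fun n => (p n).eval x := by
  ext n
  simp [egf, Polynomial.eval_smul]

lemma coeff_mul_eq_of_coeff_eq {R : Type*} [CommSemiring R] (h : R⟦X⟧) {f g : R⟦X⟧} {n : ℕ}
    (hfg : ∀ i ≤ n, coeff i f = coeff i g) : coeff n (h * f) = coeff n (h * g) := by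
  rw [coeff_mul, coeff_mul]
  refine sum_congr rfl fun p hp => ?_
  rw [hfg p.2 (by have := mem_antidiagonal.1 hp; omega)]

-- `Lik` is defined coefficientwise; these partial sums of `∑ (1 - e^{-t})^m / m^k` can be
-- differentiated termwise.
noncomputable def polylogTrunc (k : ℤ) (M : ℕ) : ℂ⟦X⟧ :=
  ∑ m ∈ Icc 1 M, ((m : ℂ) ^ k)⁻¹ • (1 - expS (-1 : ℂ)) ^ m

lemma coeff_Lik_eq_coeff_polylogTrunc {k : ℤ} {n M : ℕ} (h : n ≤ M) :
    coeff n (Lik k) = coeff n (polylogTrunc k M) := by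
  simp only [Lik, coeff_mk, polylogTrunc, map_sum, map_smul, smul_eq_mul]
  refine sum_subset (Icc_subset_Icc_right h) fun m hm hnm => ?_
  have hnm : n < m := by simp only [mem_Icc] at hm hnm; omega
  rw [coeff_one_sub_expS_pow_of_lt _ hnm, mul_zero]

lemma one_sub_expS_mul_derivative_polylogTrunc (k : ℤ) (M : ℕ) :
    (1 - expS (-1 : ℂ)) * d⁄dX ℂ (polylogTrunc k M) = expS (-1) * polylogTrunc (k - 1) M := by
  simp only [polylogTrunc, map_sum, mul_sum]
  refine sum_congr rfl fun m hm => ?_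
  have hm : m ≠ 0 := by have := (mem_Icc.1 hm).1; omega
  have hmC : (m : ℂ) ≠ 0 := Nat.cast_ne_zero.2 hm
  obtain ⟨j, rfl⟩ := Nat.exists_eq_add_one_of_ne_zero hm
  rw [Derivation.map_smul, Derivation.leibniz_pow, map_sub, Derivation.map_one_eq_zero,
    derivative_expS, zpow_sub_one₀ hmC, mul_inv, inv_inv]
  simp only [Nat.add_sub_cancel, smul_eq_C_mul, nsmul_eq_mul, map_mul, map_natCast, map_neg,
    map_one]
  ring

lemma one_sub_expS_mul_derivative_Lik (k : ℤ) :
    (1 - expS (-1 : ℂ)) * d⁄dX ℂ (Lik k) = expS (-1) * Lik (k - 1) := by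
  ext n
  rw [coeff_mul_eq_of_coeff_eq _ (g := d⁄dX ℂ (polylogTrunc k (n + 1))) fun i hi => by
      rw [coeff_derivative, coeff_derivative,
        coeff_Lik_eq_coeff_polylogTrunc (M := n + 1) (by omega)],
    coeff_mul_eq_of_coeff_eq _ (g := polylogTrunc (k - 1) (n + 1)) fun i hi =>
      coeff_Lik_eq_coeff_polylogTrunc (by omega),
    one_sub_expS_mul_derivative_polylogTrunc]

lemma constantCoeff_Lik (k : ℤ) : constantCoeff (Lik k) = 0 := by
  rw [← coeff_zero_eq_constantCoeff_apply, Lik, coeff_mk, Icc_eq_empty (by omega), sum_empty]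

lemma map_evalRingHom_map_C {R : Type*} [CommRing R] (x : R) (f : R⟦X⟧) :
    map (Polynomial.evalRingHom x) (map Polynomial.C f) = f := by
  ext n
  simp

lemma factorial_mul_coeff_succ_Lik {k : ℤ} {p : ℕ → ℂ}
    (hp : Lik (k - 1) = (1 - expS (-1 : ℂ)) * egfOf p) (l : ℕ) :
    ((l + 1)! : ℂ) * coeff (l + 1) (Lik k)
      = ∑ m ∈ range (l + 1), (l.choose m : ℂ) * p m * (-1) ^ (l - m) := by
  have hderiv : d⁄dX ℂ (Lik k) = egfOf p * expS (-1) := by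
    refine mul_left_cancel₀ (one_sub_expS_ne_zero (neg_ne_zero.2 one_ne_zero)) ?_
    rw [one_sub_expS_mul_derivative_Lik, hp]
    ring
  rw [← factorial_mul_coeff_derivative, hderiv, expS_eq_egfOf, egfOf_mul,
    factorial_mul_coeff_egfOf]

lemma factorial_mul_coeff_succ_Lik_mul {k : ℤ} {p : ℕ → ℂ}
    (hp : Lik (k - 1) = (1 - expS (-1 : ℂ)) * egfOf p) (b : ℕ → ℂ) (n : ℕ) :
    ((n + 1)! : ℂ) * coeff (n + 1) (Lik k * egfOf b)
      = ∑ l ∈ range (n + 1), ∑ m ∈ range (l + 1),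
          (-1) ^ (l - m) * (l.choose m : ℂ) * ((n + 1).choose (l + 1) : ℂ) * p m * b (n - l) := by
  rw [← egfOf_factorial_mul_coeff (Lik k), egfOf_mul, factorial_mul_coeff_egfOf, sum_range_succ',
    Nat.factorial_zero, Nat.cast_one, one_mul, coeff_zero_eq_constantCoeff_apply,
    constantCoeff_Lik, mul_zero, zero_mul, add_zero]
  refine sum_congr rfl fun l _ => ?_
  rw [factorial_mul_coeff_succ_Lik hp, Nat.add_sub_add_right, mul_sum, sum_mul]
  exact sum_congr rfl fun m _ => by ring

theorem stmt8_general (r : ℕ) (k : ℤ) (a : Fin r → ℂ)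
    (S Bp PB' : ℕ → Polynomial ℂ)
    -- `S n` is the mixed-type polynomial `S_n^{(r,k)}(x|a_1,…,a_r)`:
    (hS : (PowerSeries.X : PowerSeries (Polynomial ℂ)) ^ r
        * PowerSeries.map Polynomial.C (Lik k) * expS Polynomial.X
        = (∏ j, (expS (Polynomial.C (a j)) - 1)) * (1 - expS (-1 : Polynomial ℂ)) * egf S)
    -- `Bp n` is the Barnes' multiple Bernoulli polynomial `B_n(x|a_1,…,a_r)`:
    (hB : (PowerSeries.X : PowerSeries (Polynomial ℂ)) ^ r * expS Polynomial.X
        = (∏ j, (expS (Polynomial.C (a j)) - 1)) * egf Bp)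
    -- `PB' n` is the poly-Bernoulli polynomial `B_n^{(k-1)}(x)` of index `k - 1`:
    (hPB' : PowerSeries.map Polynomial.C (Lik (k - 1)) * expS Polynomial.X
        = (1 - expS (-1 : Polynomial ℂ)) * egf PB')
    (n : ℕ) :
    ∑ m ∈ Finset.range (n + 1),
        ((n + 1).choose m : ℂ) * (-1 : ℂ) ^ (n - m) * (S m).eval 0
      = ∑ l ∈ Finset.range (n + 1), ∑ m ∈ Finset.range (l + 1),
          (-1 : ℂ) ^ (l - m) * (l.choose m : ℂ) * ((n + 1).choose (l + 1) : ℂ)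
            * (PB' m).eval 0 * (Bp (n - l)).eval 0 := by
  have hS₀ := congrArg (map (Polynomial.evalRingHom 0)) hS
  have hB₀ := congrArg (map (Polynomial.evalRingHom 0)) hB
  have hP₀ := congrArg (map (Polynomial.evalRingHom 0)) hPB'
  simp only [map_mul, map_pow, map_sub, map_one, map_prod, map_neg, map_X, map_expS,
    map_evalRingHom_map_C, Polynomial.coe_evalRingHom, Polynomial.eval_X, Polynomial.eval_C, expS_zero, mul_one,
    map_evalRingHom_egf] at hS₀ hB₀ hP₀
  have hprod : ∏ j, (expS (a j) - 1) ≠ 0 := by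
    intro h0
    rw [h0, zero_mul] at hB₀
    exact pow_ne_zero r X_ne_zero hB₀
  have hs : (1 - expS (-1 : ℂ)) * egfOf (fun m => (S m).eval 0)
      = Lik k * egfOf fun m => (Bp m).eval 0 := by
    refine mul_left_cancel₀ hprod ?_
    rw [← mul_assoc, ← hS₀, hB₀]
    ring
  rw [← factorial_mul_coeff_succ_one_sub_expS_neg_one_mul, hs,
    factorial_mul_coeff_succ_Lik_mul hP₀]

theorem stmt8 (r : ℕ) (hr : 0 < r) (k : ℤ) (a : Fin r → ℂ) (ha : ∀ j, a j ≠ 0)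
    (S Bp PB' : ℕ → Polynomial ℂ)
    -- `S n` is the mixed-type polynomial `S_n^{(r,k)}(x|a_1,…,a_r)`:
    (hS : (PowerSeries.X : PowerSeries (Polynomial ℂ)) ^ r
        * PowerSeries.map Polynomial.C (Lik k) * expS Polynomial.X
        = (∏ j, (expS (Polynomial.C (a j)) - 1)) * (1 - expS (-1 : Polynomial ℂ)) * egf S)
    -- `Bp n` is the Barnes' multiple Bernoulli polynomial `B_n(x|a_1,…,a_r)`:
    (hB : (PowerSeries.X : PowerSeries (Polynomial ℂ)) ^ r * expS Polynomial.X
        = (∏ j, (expS (Polynomial.C (a j)) - 1)) * egf Bp)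
    -- `PB' n` is the poly-Bernoulli polynomial `B_n^{(k-1)}(x)` of index `k - 1`:
    (hPB' : PowerSeries.map Polynomial.C (Lik (k - 1)) * expS Polynomial.X
        = (1 - expS (-1 : Polynomial ℂ)) * egf PB')
    (n : ℕ) :
    ∑ m ∈ Finset.range (n + 1),
        ((n + 1).choose m : ℂ) * (-1 : ℂ) ^ (n - m) * (S m).eval 0
      = ∑ l ∈ Finset.range (n + 1), ∑ m ∈ Finset.range (l + 1),
          (-1 : ℂ) ^ (l - m) * (l.choose m : ℂ) * ((n + 1).choose (l + 1) : ℂ)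
            * (PB' m).eval 0 * (Bp (n - l)).eval 0 :=
  stmt8_general r k a S Bp PB' hS hB hPB' n
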